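/- Let ρ be a density matrix on ℂ^{d_A} ⊗ ℂ^{d_B} that is separable. Then the partial transpose ρ^{T_B} is positive semidefinite (i.e., separable states satisfy the Peres-Horodecki PPT criterion). -/

import Mathlib

open Matrix
open scoped BigOperators ComplexOrder Kronecker

/-- A density matrix: positive semidefinite with unit trace. -/
def IsDensity {m : Type*} [Fintype m] (ρ : Matrix m m ℂ) : Prop :=
  ρ.PosSemidef ∧ ρ.trace = 1

/-- A bipartite density matrix is separable if it is a finite convex combination of
Kronecker products of density matrices on the two factors. -/
def Separable {dA dB : ℕ}
    (ρ : Matrix (Fin dA × Fin dB) (Fin dA × Fin dB) ℂ) : Prop :=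
  ∃ (n : ℕ) (q : Fin n → ℝ)
    (ρA : Fin n → Matrix (Fin dA) (Fin dA) ℂ)
    (ρB : Fin n → Matrix (Fin dB) (Fin dB) ℂ),
    (∀ j, 0 ≤ q j) ∧ (∑ j, q j) = 1 ∧
    (∀ j, IsDensity (ρA j)) ∧ (∀ j, IsDensity (ρB j)) ∧
    ρ = ∑ j, (q j : ℂ) • (ρA j ⊗ₖ ρB j)

/-- The partial transpose with respect to the second factor:
`(ρ^{T_B})_{(i,a),(j,b)} = ρ_{(i,b),(j,a)}`. -/
def partialTransposeB {dA dB : ℕ}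
    (ρ : Matrix (Fin dA × Fin dB) (Fin dA × Fin dB) ℂ) :
    Matrix (Fin dA × Fin dB) (Fin dA × Fin dB) ℂ :=
  Matrix.of fun p q => ρ (p.1, q.2) (q.1, p.2)

lemma psd_smul_real {m : Type*} [Fintype m] {c : ℝ} (hc : 0 ≤ c)
    {M : Matrix m m ℂ} (hM : M.PosSemidef) : ((c : ℂ) • M).PosSemidef := by
  rw [Matrix.posSemidef_iff_dotProduct_mulVec]
  constructor
  · unfold Matrix.IsHermitian
    rw [conjTranspose_smul, hM.1]
    congr 1
    simp
  · intro x
    rw [smul_mulVec, dotProduct_smul]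
    exact mul_nonneg (by exact_mod_cast hc) (hM.dotProduct_mulVec_nonneg x)

lemma psd_sum {m : Type*} [Fintype m] {n : ℕ} (M : Fin n → Matrix m m ℂ)
    (h : ∀ j, (M j).PosSemidef) : (∑ j, M j).PosSemidef := by
  classical
  induction n with
  | zero => simpa using Matrix.PosSemidef.zero
  | succ k ih =>
      rw [Fin.sum_univ_succ]
      exact ((h 0).add (ih _ (fun j => h j.succ)))

lemma psd_kronecker {dA dB : ℕ} {A : Matrix (Fin dA) (Fin dA) ℂ}
    {B : Matrix (Fin dB) (Fin dB) ℂ} (hA : A.PosSemidef) (hB : B.PosSemidef) :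
    (A ⊗ₖ B).PosSemidef := by
  exact hA.kronecker hB

/-- **Peres–Horodecki (necessity).** Every separable density matrix has positive
semidefinite partial transpose. -/
theorem separable_implies_ppt {dA dB : ℕ}
    (ρ : Matrix (Fin dA × Fin dB) (Fin dA × Fin dB) ℂ)
    (hρ : IsDensity ρ) (hsep : Separable ρ) :
    (partialTransposeB ρ).PosSemidef := by
  obtain ⟨n, q, ρA, ρB, hq, hq1, hA, hB, hdecomp⟩ := hsep
  have key : partialTransposeB ρ = ∑ j, (q j : ℂ) • (ρA j ⊗ₖ (ρB j)ᵀ) := by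
    ext p r
    simp only [partialTransposeB, hdecomp, Matrix.of_apply, Matrix.sum_apply,
      Matrix.smul_apply, Matrix.kroneckerMap_apply, Matrix.transpose_apply, smul_eq_mul]
  rw [key]
  exact psd_sum _ fun j => psd_smul_real (hq j)
    (psd_kronecker (hA j).1 ((hB j).1.transpose))
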